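/- (Fixed-time Harrell's C-index in the absence of truncation bias dependence.) Fix t ∈ [0, ∞) and assume P(T_1 < T_2, T_1 < min(D_1, D_2)) > 0. For n ≥ 2 define Ĉ^{har}_n(t) = [Σ_{1≤i≠j≤n} 1{T_i < D_i}·1{S(t; Z_i) < S(t; Z_j)}·1{T_i < X_j}] / [Σ_{1≤i≠j≤n} 1{T_i < D_i}·1{T_i < X_j}]. Then, as n → ∞, Ĉ^{har}_n(t) converges in probability to P(S(t; Z_1) < S(t; Z_2), T_1 < T_2, T_1 < min(D_1, D_2)) / P(T_1 < T_2, T_1 < min(D_1, D_2)). -/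

import Mathlib

/-!
The numerator and the denominator of `Ĉ^har_n(t)`, divided by the number `n (n - 1)` of ordered
pairs of distinct indices, are U-statistics of order two with the bounded kernels
`1{(ζᵢ, ζⱼ) ∈ M}` for the sets `M` of concordant, resp. comparable, pairs. A U-statistic with a
bounded kernel satisfies a weak law of large numbers: the centered summands of two pairs with no
common index are independent, hence uncorrelated, so the variance of the U-statistic is
`O(n³) / (n (n - 1))² = O(1 / n)`, and Chebyshev's inequality applies. Since the limit of the
denominators is positive, convergence in probability passes to the ratio.
-/

open MeasureTheory ProbabilityTheory Filter Topology Finset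
open scoped Classical

namespace Finset

variable {ι : Type*} [DecidableEq ι]

theorem sum_offDiag_eq_sum_sum_ite {M : Type*} [AddCommMonoid M] (s : Finset ι)
    (f : ι → ι → M) :
    ∑ p ∈ s.offDiag, f p.1 p.2 = ∑ i ∈ s, ∑ j ∈ s, if i ≠ j then f i j else 0 := by
  rw [show s.offDiag = {p ∈ s ×ˢ s | p.1 ≠ p.2} by ext; simp [and_assoc], sum_filter,
    sum_product]

theorem card_filter_offDiag_mem_le (s t : Finset ι) :
    #{q ∈ s.offDiag | q.1 ∈ t ∨ q.2 ∈ t} ≤ 2 * #t * #s := by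
  calc #{q ∈ s.offDiag | q.1 ∈ t ∨ q.2 ∈ t}
      ≤ #(t ×ˢ s ∪ s ×ˢ t) := card_le_card fun q hq => by
        simp only [mem_filter, mem_offDiag] at hq
        simp only [mem_union, mem_product]
        tauto
    _ ≤ #(t ×ˢ s) + #(s ×ˢ t) := card_union_le _ _
    _ = 2 * #t * #s := by rw [card_product, card_product]; ring

end Finset

section ConvergenceInMeasure

variable {Ω ι : Type*} [MeasurableSpace Ω] {P : Measure Ω} {l : Filter ι}

theorem MeasureTheory.TendstoInMeasure.div_of_const {f g : ι → Ω → ℝ} {a b : ℝ}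
    (hf : TendstoInMeasure P f l (fun _ => a)) (hg : TendstoInMeasure P g l (fun _ => b))
    (hb : b ≠ 0) :
    TendstoInMeasure P (fun i ω => f i ω / g i ω) l (fun _ => a / b) := by
  rw [tendstoInMeasure_iff_dist] at hf hg ⊢
  intro ε hε
  obtain ⟨δ, hδ, hdiv⟩ := Metric.continuousAt_iff.mp
    (continuousAt_fst.div continuousAt_snd hb : ContinuousAt (fun p : ℝ × ℝ => p.1 / p.2) (a, b))
    ε hε
  have hsub : ∀ i, {ω | ε ≤ dist (f i ω / g i ω) (a / b)} ⊆
      {ω | δ ≤ dist (f i ω) a} ∪ {ω | δ ≤ dist (g i ω) b} := fun i ω hω => by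
    by_contra hclose
    simp only [Set.mem_union, Set.mem_ofPred_eq, not_or, not_le] at hclose hω
    exact hω.not_gt (hdiv (x := (f i ω, g i ω))
      (by rw [Prod.dist_eq]; exact max_lt hclose.1 hclose.2))
  exact tendsto_of_tendsto_of_tendsto_of_le_of_le tendsto_const_nhds
    (by simpa using (hf δ hδ).add (hg δ hδ)) (fun _ => bot_le)
    (fun i => (measure_mono (hsub i)).trans (measure_union_le _ _))

theorem tendstoInMeasure_const_of_integral_sq_sub [IsFiniteMeasure P] {f : ι → Ω → ℝ} {c : ℝ}
    (hint : ∀ i, Integrable (fun ω => (f i ω - c) ^ 2) P)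
    (hlim : Tendsto (fun i => ∫ ω, (f i ω - c) ^ 2 ∂P) l (𝓝 0)) :
    TendstoInMeasure P f l (fun _ => c) := by
  rw [tendstoInMeasure_iff_measureReal_dist]
  intro ε hε
  have hε2 : 0 < ε ^ 2 := by positivity
  refine squeeze_zero (fun _ => measureReal_nonneg) (fun i => ?_)
    (by simpa using hlim.div_const (ε ^ 2))
  calc P.real {ω | ε ≤ dist (f i ω) c}
      ≤ P.real {ω | ε ^ 2 ≤ (f i ω - c) ^ 2} := by
        refine measureReal_mono fun ω hω => ?_
        simp only [Set.mem_ofPred_eq, Real.dist_eq] at hω ⊢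
        rw [← sq_abs (f i ω - c)]
        exact pow_le_pow_left₀ hε.le hω 2
    _ ≤ (∫ ω, (f i ω - c) ^ 2 ∂P) / ε ^ 2 := by
        rw [le_div_iff₀ hε2, mul_comm]
        exact mul_meas_ge_le_integral_of_nonneg (.of_forall fun _ => sq_nonneg _) (hint i) _

end ConvergenceInMeasure

theorem integral_sq_sum_le_of_sparse_correlations {Ω ι : Type*} [MeasurableSpace Ω]
    {P : Measure Ω} [IsProbabilityMeasure P] (s : Finset ι) {h : ι → Ω → ℝ} {B : ℝ} {N : ℕ}
    (R : ι → ι → Prop) [DecidableRel R] (hmeas : ∀ i, AEStronglyMeasurable (h i) P)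
    (hB : ∀ i ω, |h i ω| ≤ B)
    (horth : ∀ i ∈ s, ∀ j ∈ s, ¬ R i j → ∫ ω, h i ω * h j ω ∂P = 0)
    (hR : ∀ i ∈ s, #{j ∈ s | R i j} ≤ N) :
    ∫ ω, (∑ i ∈ s, h i ω) ^ 2 ∂P ≤ #s * N * B ^ 2 := by
  have hprod : ∀ i j ω, |h i ω * h j ω| ≤ B ^ 2 := fun i j ω => by
    rw [abs_mul, sq]
    exact mul_le_mul (hB i ω) (hB j ω) (abs_nonneg _) ((abs_nonneg _).trans (hB i ω))
  have hint : ∀ i j, Integrable (fun ω => h i ω * h j ω) P := fun i j =>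
    .of_bound ((hmeas i).mul (hmeas j)) (B ^ 2) (.of_forall (hprod i j))
  have hcorr : ∀ i j, ∫ ω, h i ω * h j ω ∂P ≤ B ^ 2 := fun i j =>
    (integral_mono (hint i j) (integrable_const (B ^ 2))
      fun ω => (le_abs_self _).trans (hprod i j ω)).trans_eq (by simp)
  calc ∫ ω, (∑ i ∈ s, h i ω) ^ 2 ∂P
      = ∑ i ∈ s, ∑ j ∈ s, ∫ ω, h i ω * h j ω ∂P := by
        simp_rw [sq, sum_mul_sum]
        rw [integral_finsetSum _ fun i _ => integrable_finsetSum _ fun j _ => hint i j]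
        exact sum_congr rfl fun i _ => integral_finsetSum _ fun j _ => hint i j
    _ = ∑ i ∈ s, ∑ j ∈ s with R i j, ∫ ω, h i ω * h j ω ∂P := by
        refine sum_congr rfl fun i hi => (sum_filter_of_ne fun j hj hne => ?_).symm
        by_contra hij
        exact hne (horth i hi j hj hij)
    _ ≤ ∑ i ∈ s, (N * B ^ 2 : ℝ) := by
        refine sum_le_sum fun i hi => ?_
        calc ∑ j ∈ s with R i j, ∫ ω, h i ω * h j ω ∂P
            ≤ ∑ j ∈ s with R i j, B ^ 2 := sum_le_sum fun j _ => hcorr i j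
          _ = #{j ∈ s | R i j} * B ^ 2 := by rw [sum_const, nsmul_eq_mul]
          _ ≤ N * B ^ 2 := by gcongr; exact_mod_cast hR i hi
    _ = #s * N * B ^ 2 := by rw [sum_const, nsmul_eq_mul, mul_assoc]

section UStatistic

variable {Ω α : Type*} {X : ℕ → Ω → α} {g : α × α → ℝ}

noncomputable def uStatistic (X : ℕ → Ω → α) (g : α × α → ℝ) (n : ℕ) (ω : Ω) : ℝ :=
  (∑ p ∈ (range n).offDiag, g (X p.1 ω, X p.2 ω)) / #(range n).offDiag

theorem card_offDiag_range (n : ℕ) : (#(range n).offDiag : ℝ) = n * (n - 1) := by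
  rw [offDiag_card, card_range, Nat.cast_sub (Nat.le_mul_self n)]
  push_cast
  ring

theorem abs_uStatistic_le {C : ℝ} (hC : ∀ x, |g x| ≤ C) (n : ℕ) (ω : Ω) :
    |uStatistic X g n ω| ≤ C := by
  have hC₀ : 0 ≤ C := (abs_nonneg _).trans (hC (X 0 ω, X 0 ω))
  rw [uStatistic, abs_div, Nat.abs_cast]
  refine div_le_of_le_mul₀ (Nat.cast_nonneg _) hC₀ ?_
  calc |∑ p ∈ (range n).offDiag, g (X p.1 ω, X p.2 ω)|
      ≤ ∑ p ∈ (range n).offDiag, |g (X p.1 ω, X p.2 ω)| := abs_sum_le_sum_abs _ _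
    _ ≤ ∑ p ∈ (range n).offDiag, C := sum_le_sum fun p _ => hC _
    _ = C * #(range n).offDiag := by rw [sum_const, nsmul_eq_mul, mul_comm]

variable [MeasurableSpace Ω] [MeasurableSpace α] {P : Measure Ω} [IsProbabilityMeasure P]

theorem map_prodMk_eq_prod_of_ne (hX : ∀ i, Measurable (X i))
    (hident : ∀ i, P.map (X i) = P.map (X 0)) (hindep : iIndepFun X P) {i j : ℕ} (hij : i ≠ j) :
    P.map (fun ω => (X i ω, X j ω)) = (P.map (X 0)).prod (P.map (X 0)) := by
  rw [(indepFun_iff_map_prod_eq_prod_map_map (hX i).aemeasurable (hX j).aemeasurable).mp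
    (hindep.indepFun hij), hident i, hident j]

theorem integral_kernel_eq_of_ne (hX : ∀ i, Measurable (X i))
    (hident : ∀ i, P.map (X i) = P.map (X 0)) (hindep : iIndepFun X P) (hg : Measurable g)
    {i j : ℕ} (hij : i ≠ j) :
    ∫ ω, g (X i ω, X j ω) ∂P = ∫ ω, g (X 0 ω, X 1 ω) ∂P := by
  rw [← integral_map ((hX i).prodMk (hX j)).aemeasurable hg.aestronglyMeasurable,
    ← integral_map ((hX 0).prodMk (hX 1)).aemeasurable hg.aestronglyMeasurable,
    map_prodMk_eq_prod_of_ne hX hident hindep hij, map_prodMk_eq_prod_of_ne hX hident hindep zero_ne_one]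

theorem integral_sq_sum_centered_kernel_le (hX : ∀ i, Measurable (X i))
    (hident : ∀ i, P.map (X i) = P.map (X 0)) (hindep : iIndepFun X P) (hg : Measurable g)
    {C : ℝ} (hC : ∀ x, |g x| ≤ C) (n : ℕ) :
    ∫ ω, (∑ p ∈ (range n).offDiag, (g (X p.1 ω, X p.2 ω) - ∫ ω', g (X 0 ω', X 1 ω') ∂P)) ^ 2 ∂P
      ≤ #(range n).offDiag * (4 * n : ℕ) * (2 * C) ^ 2 := by
  set μ := ∫ ω', g (X 0 ω', X 1 ω') ∂P
  set h : ℕ × ℕ → Ω → ℝ := fun p ω => g (X p.1 ω, X p.2 ω) - μ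
  have hmeas : ∀ p, Measurable (h p) := fun p =>
    (hg.comp ((hX p.1).prodMk (hX p.2))).sub_const μ
  have hmean : ∀ p ∈ (range n).offDiag, ∫ ω, h p ω ∂P = 0 := fun p hp => by
    have hint : Integrable (fun ω => g (X p.1 ω, X p.2 ω)) P :=
      .of_bound (hg.comp ((hX p.1).prodMk (hX p.2))).aestronglyMeasurable C (.of_forall fun ω => hC _)
    rw [integral_sub hint (integrable_const μ),
      integral_kernel_eq_of_ne hX hident hindep hg (mem_offDiag.mp hp).2.2]
    simp [μ]
  have hh : ∀ p ω, |h p ω| ≤ 2 * C := fun p ω => by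
    have hμ : |μ| ≤ C := by
      simpa using norm_integral_le_of_norm_le_const (μ := P)
        (f := fun ω' => g (X 0 ω', X 1 ω')) (.of_forall fun ω' => hC _)
    calc |h p ω| ≤ |g (X p.1 ω, X p.2 ω)| + |μ| := abs_sub _ _
      _ ≤ 2 * C := by linarith [hC (X p.1 ω, X p.2 ω)]
  refine integral_sq_sum_le_of_sparse_correlations _
    (fun p q => q.1 ∈ ({p.1, p.2} : Finset ℕ) ∨ q.2 ∈ ({p.1, p.2} : Finset ℕ))
    (fun p => (hmeas p).aestronglyMeasurable) hh (fun p hp q _ hpq => ?_) (fun p _ => ?_)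
  · simp only [mem_insert, mem_singleton, not_or] at hpq
    have hind : IndepFun (h p) (h q) P :=
      (hindep.indepFun_prodMk_prodMk hX p.1 p.2 q.1 q.2 (Ne.symm hpq.1.1) (Ne.symm hpq.2.1)
        (Ne.symm hpq.1.2) (Ne.symm hpq.2.2)).comp (hg.sub_const μ) (hg.sub_const μ)
    rw [hind.integral_fun_mul_eq_mul_integral (hmeas p).aestronglyMeasurable
      (hmeas q).aestronglyMeasurable, hmean p hp, zero_mul]
  · refine (card_filter_offDiag_mem_le (range n) {p.1, p.2}).trans ?_
    rw [card_range]
    exact Nat.mul_le_mul_right n (by linarith [card_le_two (a := p.1) (b := p.2)])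

theorem integral_sq_uStatistic_sub_le (hX : ∀ i, Measurable (X i))
    (hident : ∀ i, P.map (X i) = P.map (X 0)) (hindep : iIndepFun X P) (hg : Measurable g)
    {C : ℝ} (hC : ∀ x, |g x| ≤ C) {n : ℕ} (hn : 2 ≤ n) :
    ∫ ω, (uStatistic X g n ω - ∫ ω', g (X 0 ω', X 1 ω') ∂P) ^ 2 ∂P ≤ 16 * C ^ 2 / (n - 1) := by
  set μ := ∫ ω', g (X 0 ω', X 1 ω') ∂P
  have hn' : (2 : ℝ) ≤ n := by exact_mod_cast hn
  have hcard : (#(range n).offDiag : ℝ) ≠ 0 := by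
    rw [card_offDiag_range]
    exact mul_ne_zero (by linarith) (by linarith)
  have hcenter : ∀ ω, uStatistic X g n ω - μ =
      (∑ p ∈ (range n).offDiag, (g (X p.1 ω, X p.2 ω) - μ)) / #(range n).offDiag := fun ω => by
    rw [uStatistic, sum_sub_distrib, sum_const, nsmul_eq_mul]
    field_simp
  calc ∫ ω, (uStatistic X g n ω - μ) ^ 2 ∂P
      = (∫ ω, (∑ p ∈ (range n).offDiag, (g (X p.1 ω, X p.2 ω) - μ)) ^ 2 ∂P)
          / #(range n).offDiag ^ 2 := by
        simp_rw [hcenter, div_pow]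
        exact integral_div _ _
    _ ≤ #(range n).offDiag * (4 * n : ℕ) * (2 * C) ^ 2 / #(range n).offDiag ^ 2 := by
        gcongr
        exact integral_sq_sum_centered_kernel_le hX hident hindep hg hC n
    _ = 16 * C ^ 2 / (n - 1) := by
        rw [card_offDiag_range] at hcard ⊢
        have : (n : ℝ) - 1 ≠ 0 := by linarith
        field_simp
        push_cast
        ring

theorem tendstoInMeasure_uStatistic (hX : ∀ i, Measurable (X i))
    (hident : ∀ i, P.map (X i) = P.map (X 0)) (hindep : iIndepFun X P) (hg : Measurable g)
    {C : ℝ} (hC : ∀ x, |g x| ≤ C) :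
    TendstoInMeasure P (uStatistic X g) atTop (fun _ => ∫ ω, g (X 0 ω, X 1 ω) ∂P) := by
  set μ := ∫ ω, g (X 0 ω, X 1 ω) ∂P
  refine tendstoInMeasure_const_of_integral_sq_sub (fun n => ?_) ?_
  · have hmeas : Measurable (uStatistic X g n) :=
      (Finset.measurable_sum _ fun p _ => hg.comp ((hX p.1).prodMk (hX p.2))).div_const _
    refine .of_bound ((hmeas.sub_const μ).pow_const 2).aestronglyMeasurable ((C + |μ|) ^ 2)
      (.of_forall fun ω => ?_)
    rw [Real.norm_eq_abs, abs_pow]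
    exact pow_le_pow_left₀ (abs_nonneg _)
      ((abs_sub _ _).trans (by linarith [abs_uStatistic_le (X := X) hC n ω])) 2
  · have hbound : Tendsto (fun n : ℕ => 16 * C ^ 2 / ((n : ℝ) - 1)) atTop (𝓝 0) :=
      tendsto_const_nhds.div_atTop
        (tendsto_atTop_add_const_right _ _ tendsto_natCast_atTop_atTop)
    refine squeeze_zero' (.of_forall fun n => integral_nonneg fun ω => sq_nonneg _)
      ((eventually_ge_atTop 2).mono fun n hn => ?_) hbound
    exact integral_sq_uStatistic_sub_le hX hident hindep hg hC hn

theorem tendstoInMeasure_uStatistic_indicator (hX : ∀ i, Measurable (X i))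
    (hident : ∀ i, P.map (X i) = P.map (X 0)) (hindep : iIndepFun X P) {M : Set (α × α)}
    (hM : MeasurableSet M) :
    TendstoInMeasure P (uStatistic X (M.indicator 1)) atTop
      (fun _ => P.real {ω | (X 0 ω, X 1 ω) ∈ M}) := by
  have hlim : ∫ ω, M.indicator 1 (X 0 ω, X 1 ω) ∂P = P.real {ω | (X 0 ω, X 1 ω) ∈ M} :=
    integral_indicator_one (((hX 0).prodMk (hX 1)) hM)
  rw [← hlim]
  exact tendstoInMeasure_uStatistic hX hident hindep (measurable_const.indicator hM)
    (C := 1) fun x => by by_cases hx : x ∈ M <;> simp [hx]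

end UStatistic

theorem stmt_14_general {Ω : Type*} [MeasurableSpace Ω] (P : Measure Ω) [IsProbabilityMeasure P]
    {E : Type*} [MeasurableSpace E]
    (S : ℝ → E → ℝ) (hSmeas : Measurable fun p : ℝ × E => S p.1 p.2)
    (ζ : ℕ → Ω → E × ℝ × ℝ)
    (hmeas : ∀ i, Measurable (ζ i))
    (hident : ∀ i, P.map (ζ i) = P.map (ζ 0))
    (hindep : iIndepFun ζ P)
    (t : ℝ)
    (hpos : 0 < P {ω | (ζ 0 ω).2.1 < (ζ 1 ω).2.1 ∧
        (ζ 0 ω).2.1 < min ((ζ 0 ω).2.2) ((ζ 1 ω).2.2)}) :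
    TendstoInMeasure P
      (fun n ω =>
        (∑ i ∈ Finset.range n, ∑ j ∈ Finset.range n,
          if i ≠ j ∧ (ζ i ω).2.1 < (ζ i ω).2.2 ∧
              S t ((ζ i ω).1) < S t ((ζ j ω).1) ∧
              (ζ i ω).2.1 < min ((ζ j ω).2.1) ((ζ j ω).2.2)
            then (1 : ℝ) else 0) /
        (∑ i ∈ Finset.range n, ∑ j ∈ Finset.range n,
          if i ≠ j ∧ (ζ i ω).2.1 < (ζ i ω).2.2 ∧
              (ζ i ω).2.1 < min ((ζ j ω).2.1) ((ζ j ω).2.2)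
            then (1 : ℝ) else 0))
      atTop
      (fun _ =>
        (P {ω | S t ((ζ 0 ω).1) < S t ((ζ 1 ω).1) ∧ (ζ 0 ω).2.1 < (ζ 1 ω).2.1 ∧
            (ζ 0 ω).2.1 < min ((ζ 0 ω).2.2) ((ζ 1 ω).2.2)}).toReal /
        (P {ω | (ζ 0 ω).2.1 < (ζ 1 ω).2.1 ∧
            (ζ 0 ω).2.1 < min ((ζ 0 ω).2.2) ((ζ 1 ω).2.2)}).toReal) := by
  -- Written so that `{ω | (ζ 0 ω, ζ 1 ω) ∈ M}` is literally the event in the limit.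
  set concordant : Set ((E × ℝ × ℝ) × (E × ℝ × ℝ)) :=
    {p | S t p.1.1 < S t p.2.1 ∧ p.1.2.1 < p.2.2.1 ∧ p.1.2.1 < min p.1.2.2 p.2.2.2}
  set comparable : Set ((E × ℝ × ℝ) × (E × ℝ × ℝ)) :=
    {p | p.1.2.1 < p.2.2.1 ∧ p.1.2.1 < min p.1.2.2 p.2.2.2}
  have hconc : MeasurableSet concordant := by measurability
  have hcomp : MeasurableSet comparable := by measurability
  have hlim := (tendstoInMeasure_uStatistic_indicator hmeas hident hindep hconc).div_of_const
    (tendstoInMeasure_uStatistic_indicator hmeas hident hindep hcomp)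
    (ENNReal.toReal_pos hpos.ne' (measure_ne_top _ _)).ne'
  refine hlim.congr' ((eventually_ge_atTop 2).mono fun n hn => .of_forall fun ω => ?_) .rfl
  have hcard : (#(range n).offDiag : ℝ) ≠ 0 :=
    Nat.cast_ne_zero.mpr (card_pos.mpr ⟨(0, 1), by simp; omega⟩).ne'
  simp only [uStatistic]
  rw [div_div_div_cancel_right₀ hcard]
  congr 1 <;> rw [sum_offDiag_eq_sum_sum_ite (f := fun i j => Set.indicator _ 1 (ζ i ω, ζ j ω))]
    <;> refine sum_congr rfl fun i _ => sum_congr rfl fun j _ => ?_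
    <;> simp only [Set.indicator_apply, concordant, comparable, Set.mem_ofPred_eq, lt_min_iff,
      Pi.one_apply]
    <;> grind

/-- **Convergence in probability of the fixed-time Harrell's C-index.**
`ζ i = (Zᵢ, Tᵢ, Dᵢ)` is an i.i.d. sequence of (covariate, event time, censoring time)
triples with `D₁` independent of `(Z₁, T₁)` and `S` a fixed measurable predicted survival
curve with values in `[0,1]`.  Fix `t ≥ 0` and assume
`P(T₁ < T₂, T₁ < min(D₁,D₂)) > 0`.  Then `Ĉ^har_n(t)` converges in probability to
`P(S(t;Z₁) < S(t;Z₂), T₁ < T₂, T₁ < min(D₁,D₂)) / P(T₁ < T₂, T₁ < min(D₁,D₂))`. -/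
theorem stmt_14 {Ω : Type*} [MeasurableSpace Ω] (P : Measure Ω) [IsProbabilityMeasure P]
    {E : Type*} [MeasurableSpace E]
    (S : ℝ → E → ℝ) (hSmeas : Measurable fun p : ℝ × E => S p.1 p.2)
    (hS01 : ∀ s z, S s z ∈ Set.Icc (0 : ℝ) 1)
    (ζ : ℕ → Ω → E × ℝ × ℝ)
    (hmeas : ∀ i, Measurable (ζ i))
    (hident : ∀ i, P.map (ζ i) = P.map (ζ 0))
    (hindep : iIndepFun ζ P)
    (hTnonneg : ∀ i ω, 0 ≤ (ζ i ω).2.1) (hDnonneg : ∀ i ω, 0 ≤ (ζ i ω).2.2)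
    (hDindep : IndepFun (fun ω => ((ζ 0 ω).1, (ζ 0 ω).2.1)) (fun ω => (ζ 0 ω).2.2) P)
    (t : ℝ) (ht : 0 ≤ t)
    (hpos : 0 < P {ω | (ζ 0 ω).2.1 < (ζ 1 ω).2.1 ∧
        (ζ 0 ω).2.1 < min ((ζ 0 ω).2.2) ((ζ 1 ω).2.2)}) :
    TendstoInMeasure P
      (fun n ω =>
        (∑ i ∈ Finset.range n, ∑ j ∈ Finset.range n,
          if i ≠ j ∧ (ζ i ω).2.1 < (ζ i ω).2.2 ∧
              S t ((ζ i ω).1) < S t ((ζ j ω).1) ∧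
              (ζ i ω).2.1 < min ((ζ j ω).2.1) ((ζ j ω).2.2)
            then (1 : ℝ) else 0) /
        (∑ i ∈ Finset.range n, ∑ j ∈ Finset.range n,
          if i ≠ j ∧ (ζ i ω).2.1 < (ζ i ω).2.2 ∧
              (ζ i ω).2.1 < min ((ζ j ω).2.1) ((ζ j ω).2.2)
            then (1 : ℝ) else 0))
      atTop
      (fun _ =>
        (P {ω | S t ((ζ 0 ω).1) < S t ((ζ 1 ω).1) ∧ (ζ 0 ω).2.1 < (ζ 1 ω).2.1 ∧
            (ζ 0 ω).2.1 < min ((ζ 0 ω).2.2) ((ζ 1 ω).2.2)}).toReal /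
        (P {ω | (ζ 0 ω).2.1 < (ζ 1 ω).2.1 ∧
            (ζ 0 ω).2.1 < min ((ζ 0 ω).2.2) ((ζ 1 ω).2.2)}).toReal) :=
  stmt_14_general P S hSmeas ζ hmeas hident hindep t hpos
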